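/- For every θ > 0, the function u(z) = log(-(1/θ)·sinh(θ·log|z|)) is smooth on the punctured unit disk 𝔻₀ and satisfies Δu(z) = -θ²/(|z|²·sinh²(θ·log|z|)) = -1/(|z|²·h_θ(z)²) for all z ∈ 𝔻₀. (This is the statement that the model metric k_θ = diag(h_θ, h_θ⁻¹) is Hermitian–Einstein, i.e. F_{k_θ} + [φ, φ^{*_θ}] = 0, for the model Higgs field φ = [[0,0],[1/2,0]]·z⁻¹dz of Proposition 3.1.) -/

import Mathlib

/-!
The function is `u = g (log |z|)` with `g s = log (-(1/θ) sinh (θ s))`, and for any such function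
`Δ u (z) = g'' (log |z|) / |z|²`: with `s = log (x² + y²) / 2`, the second `x`-partial is
`(g'' x² + g' (y² - x²)) / |z|⁴`, the `y`-partial is the same with `x, y` swapped, and the `g'`
terms cancel. Finally `g' = θ cosh (θ s) / sinh (θ s)` and, as `cosh² - sinh² = 1`,
`g'' = -θ² / sinh² (θ s)`.
-/

open Real Complex Filter Topology Set

noncomputable section

/-- The punctured unit disk `𝔻₀ = {z : 0 < |z| < 1}`. -/
def puncturedDisk : Set ℂ := {z : ℂ | 0 < ‖z‖ ∧ ‖z‖ < 1}

/-- The Euclidean Laplacian `Δu = ∂²u/∂x² + ∂²u/∂y²` of a function on `ℂ ≅ ℝ²`. -/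
def planarLaplacian (f : ℂ → ℝ) (z : ℂ) : ℝ :=
  deriv (fun x : ℝ => deriv (fun x' : ℝ => f ⟨x', z.im⟩) x) z.re +
  deriv (fun y : ℝ => deriv (fun y' : ℝ => f ⟨z.re, y'⟩) y) z.im

/-- The model metric `h_θ(z) = -(1/θ)·sinh(θ·log|z|)` on the punctured disk. -/
def modelConeMetric (θ : ℝ) (z : ℂ) : ℝ :=
  -(1/θ) * Real.sinh (θ * Real.log (‖z‖))

lemma hasDerivAt_half_log_sq_add {c x : ℝ} (hx : x ^ 2 + c ≠ 0) :
    HasDerivAt (fun x => Real.log (x ^ 2 + c) / 2) (x / (x ^ 2 + c)) x :=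
  ((((hasDerivAt_pow 2 x).add_const c).log hx).div_const 2).congr_deriv (by field_simp; ring)

lemma deriv_deriv_comp_half_log_sq_add {g g' : ℝ → ℝ} {g'' c x : ℝ} (hx : x ^ 2 + c ≠ 0)
    (hg : ∀ᶠ s in 𝓝 (Real.log (x ^ 2 + c) / 2), HasDerivAt g (g' s) s)
    (hg' : HasDerivAt g' g'' (Real.log (x ^ 2 + c) / 2)) :
    deriv (fun x => deriv (fun x' => g (Real.log (x' ^ 2 + c) / 2)) x) x =
      (g'' * x ^ 2 + g' (Real.log (x ^ 2 + c) / 2) * (c - x ^ 2)) / (x ^ 2 + c) ^ 2 := by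
  have hcont : ContinuousAt (fun x : ℝ => x ^ 2 + c) x := by fun_prop
  have hfirst : (fun x => deriv (fun x' => g (Real.log (x' ^ 2 + c) / 2)) x)
      =ᶠ[𝓝 x] fun x => g' (Real.log (x ^ 2 + c) / 2) * (x / (x ^ 2 + c)) := by
    filter_upwards [((hcont.log hx).div_const 2).eventually hg, hcont.eventually_ne hx]
      with y hgy hy
    exact (hgy.comp y (hasDerivAt_half_log_sq_add hy)).deriv
  have hquot : HasDerivAt (fun x => x / (x ^ 2 + c)) ((c - x ^ 2) / (x ^ 2 + c) ^ 2) x :=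
    ((hasDerivAt_id x).div ((hasDerivAt_pow 2 x).add_const c) hx).congr_deriv
      (by simp only [id_eq]; ring)
  have hsecond : HasDerivAt (fun x => g' (Real.log (x ^ 2 + c) / 2) * (x / (x ^ 2 + c)))
      (g'' * (x / (x ^ 2 + c)) * (x / (x ^ 2 + c)) +
        g' (Real.log (x ^ 2 + c) / 2) * ((c - x ^ 2) / (x ^ 2 + c) ^ 2)) x :=
    (hg'.comp x (hasDerivAt_half_log_sq_add hx)).mul hquot
  rw [hfirst.deriv_eq, hsecond.deriv]
  field_simp

lemma log_norm_mk (a b : ℝ) : Real.log ‖(⟨a, b⟩ : ℂ)‖ = Real.log (a ^ 2 + b ^ 2) / 2 := by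
  rw [Complex.norm_def, Complex.normSq_mk, 
    Real.log_sqrt (add_nonneg (mul_self_nonneg a) (mul_self_nonneg b))]
  ring_nf

theorem planarLaplacian_comp_log_norm {g g' : ℝ → ℝ} {g'' : ℝ} {z : ℂ} (hz : z ≠ 0)
    (hg : ∀ᶠ s in 𝓝 (Real.log ‖z‖), HasDerivAt g (g' s) s)
    (hg' : HasDerivAt g' g'' (Real.log ‖z‖)) :
    planarLaplacian (fun z => g (Real.log ‖z‖)) z = g'' / ‖z‖ ^ 2 := by
  have hsq : ‖z‖ ^ 2 = z.re ^ 2 + z.im ^ 2 := by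
    rw [Complex.sq_norm, Complex.normSq_apply]
    ring
  have hpos : z.re ^ 2 + z.im ^ 2 ≠ 0 := by rw [← hsq]; positivity
  have hlog : Real.log ‖z‖ = Real.log (z.re ^ 2 + z.im ^ 2) / 2 := log_norm_mk z.re z.im
  rw [hlog] at hg hg'
  simp only [planarLaplacian, log_norm_mk]
  have hswap : (fun y => deriv (fun y' => g (Real.log (z.re ^ 2 + y' ^ 2) / 2)) y) =
      fun y => deriv (fun y' => g (Real.log (y' ^ 2 + z.re ^ 2) / 2)) y := by
    simp only [add_comm (z.re ^ 2)]
  have hre := deriv_deriv_comp_half_log_sq_add hpos hg hg'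
  rw [add_comm (z.re ^ 2)] at hg hg'
  have him := deriv_deriv_comp_half_log_sq_add (by rwa [add_comm]) hg hg'
  rw [hswap, hre, him, hsq, add_comm (z.im ^ 2)]
  field_simp
  ring

lemma hasDerivAt_log_neg_sinh {θ s : ℝ} (hθs : θ * s ≠ 0) :
    HasDerivAt (fun s => Real.log (-(1 / θ) * Real.sinh (θ * s)))
      (θ * Real.cosh (θ * s) / Real.sinh (θ * s)) s := by
  have hθ : θ ≠ 0 := left_ne_zero_of_mul hθs
  have hsinh : Real.sinh (θ * s) ≠ 0 := Real.sinh_ne_zero.mpr hθs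
  have h := (((hasDerivAt_id s).const_mul θ).sinh.const_mul (-(1 / θ))).log
    (mul_ne_zero (by simpa using hθ) hsinh)
  refine h.congr_deriv ?_
  simp only [id_eq, mul_one]
  field_simp

lemma hasDerivAt_mul_cosh_div_sinh {θ s : ℝ} (hθs : θ * s ≠ 0) :
    HasDerivAt (fun s => θ * Real.cosh (θ * s) / Real.sinh (θ * s))
      (-θ ^ 2 / Real.sinh (θ * s) ^ 2) s := by
  have hsinh : Real.sinh (θ * s) ≠ 0 := Real.sinh_ne_zero.mpr hθs
  have hlin := (hasDerivAt_id s).const_mul θ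
  refine ((hlin.cosh.const_mul θ).div hlin.sinh hsinh).congr_deriv ?_
  simp only [id_eq, mul_one]
  field_simp
  linear_combination -θ ^ 2 * Real.cosh_sq_sub_sinh_sq (θ * s)

lemma planarLaplacian_log_modelConeMetric {θ : ℝ} {z : ℂ} (hz : z ≠ 0)
    (hθz : θ * Real.log ‖z‖ ≠ 0) :
    planarLaplacian (fun z => Real.log (modelConeMetric θ z)) z =
      -θ ^ 2 / (‖z‖ ^ 2 * Real.sinh (θ * Real.log ‖z‖) ^ 2) := by
  have hnear : ∀ᶠ s in 𝓝 (Real.log ‖z‖), θ * s ≠ 0 :=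
    (continuous_const_mul θ).continuousAt.eventually_ne hθz
  unfold modelConeMetric
  rw [planarLaplacian_comp_log_norm hz
    (hnear.mono fun s => hasDerivAt_log_neg_sinh) (hasDerivAt_mul_cosh_div_sinh hθz)]
  ring

lemma contDiffAt_log_modelConeMetric {θ : ℝ} {z : ℂ} {n : WithTop ℕ∞} (hz : z ≠ 0)
    (hθz : θ * Real.log ‖z‖ ≠ 0) :
    ContDiffAt ℝ n (fun z => Real.log (modelConeMetric θ z)) z := by
  have hθ : θ ≠ 0 := left_ne_zero_of_mul hθz
  have hlog : ContDiffAt ℝ n (fun z : ℂ => Real.log ‖z‖) z :=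
    (contDiffAt_norm ℝ hz).log (norm_ne_zero_iff.mpr hz)
  exact ((hlog.const_smul θ).sinh.const_smul (-(1 / θ))).log
    (mul_ne_zero (by simpa using hθ) (Real.sinh_ne_zero.mpr hθz))

/-- The function `u = log h_θ` is smooth on the punctured disk and satisfies
`Δu = -θ²/(|z|²·sinh²(θ log|z|)) = -1/(|z|²·h_θ²)`. -/
theorem stmt0 (θ : ℝ) (hθ : 0 < θ) :
    ContDiffOn ℝ (⊤ : ℕ∞) (fun z : ℂ => Real.log (modelConeMetric θ z)) puncturedDisk ∧
    ∀ z ∈ puncturedDisk,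
      planarLaplacian (fun z : ℂ => Real.log (modelConeMetric θ z)) z
        = -θ^2 / ((‖z‖)^2 * (Real.sinh (θ * Real.log (‖z‖)))^2) ∧
      planarLaplacian (fun z : ℂ => Real.log (modelConeMetric θ z)) z
        = -1 / ((‖z‖)^2 * (modelConeMetric θ z)^2) := by
  have hdisk : ∀ z ∈ puncturedDisk, z ≠ 0 ∧ θ * Real.log ‖z‖ ≠ 0 := fun z ⟨h0, h1⟩ =>
    ⟨norm_pos_iff.mp h0, (mul_neg_of_pos_of_neg hθ (Real.log_neg h0 h1)).ne⟩
  refine ⟨fun z hz => ?_, fun z hz => ?_⟩ <;> obtain ⟨hz, hθz⟩ := hdisk z hz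
  · exact (contDiffAt_log_modelConeMetric hz hθz).contDiffWithinAt
  · rw [planarLaplacian_log_modelConeMetric hz hθz, modelConeMetric]
    exact ⟨rfl, by field_simp⟩
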